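/- arXiv:2104.06948 — 5 statements merged into one kernel-verified Lean document; each statement's English description precedes it below -/
import Mathlib

section
/- Let (Ω, ℱ, ℙ) be a probability space, ι a countable index set, p : ι → (0,∞) with ∑_{r∈ι} p_r < ∞, and let (T_r)_{r∈ι} be an independent family of random variables with ℙ{T_r > t} = e^{−p_r t} for all t ≥ 0 and each r ∈ ι. Define K_t := ∑_{r∈ι} 1{T_r ≤ t} and Φ(t) := ∑_{r∈ι} (1 − e^{−t p_r}). Then K_t has finite second moment for every t ≥ 0, and for all s, t ≥ 0, Cov(K_s, K_t) = Φ(s+t) − Φ(max(s,t)) = ∑_{r∈ι} (e^{−max(s,t) p_r} − e^{−(s+t) p_r}). -/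
open Filter Topology MeasureTheory ProbabilityTheory
open scoped ENNReal

/-!
`K_t` counts the events `{T_r ≤ t}`, so `E[K_s K_t]` is the double sum of
`ℙ{T_r ≤ s, T_r' ≤ t}` over pairs `(r, r')`. By independence the off-diagonal terms factor
and cancel against `E[K_s] E[K_t]`, leaving the diagonal sum
`∑_r (ℙ{T_r ≤ min s t} - ℙ{T_r ≤ s} ℙ{T_r ≤ t}) = ∑_r (e^{-max(s,t) p_r} - e^{-(s+t) p_r})`.
All interchanges of sums and integrals are done in `ℝ≥0∞`, where they need no integrability.
-/

lemma ENNReal.tsum_prod_ite_eq {ι : Type*} [DecidableEq ι] (f : ι → ℝ≥0∞) :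
    ∑' q : ι × ι, (if q.1 = q.2 then f q.1 else 0) = ∑' r, f r := by
  rw [ENNReal.tsum_prod']
  exact tsum_congr fun r => by simp

noncomputable def eventCount {Ω ι : Type*} (A : ι → Set Ω) (ω : Ω) : ℝ≥0∞ :=
  ∑' r, (A r).indicator 1 ω

/-- Both sides are `0` when infinitely many of the events occur. -/
lemma eventCount_toReal {Ω ι : Type*} (A : ι → Set Ω) (ω : Ω) :
    (eventCount A ω).toReal = ∑' r, (A r).indicator (1 : Ω → ℝ) ω := by
  have h : ∀ r, (A r).indicator (1 : Ω → ℝ≥0∞) ω ≠ ∞ := fun r => by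
    by_cases hr : ω ∈ A r <;> simp [hr]
  rw [eventCount, ENNReal.tsum_toReal_eq h]
  exact tsum_congr fun r => by by_cases hr : ω ∈ A r <;> simp [hr]

section EventCount

variable {Ω ι : Type*} [MeasurableSpace Ω] {μ : Measure Ω} [Countable ι] {A B : ι → Set Ω}

lemma measurable_eventCount (hA : ∀ r, MeasurableSet (A r)) : Measurable (eventCount A) :=
  Measurable.tsum fun r => measurable_const.indicator (hA r)

lemma lintegral_eventCount (hA : ∀ r, MeasurableSet (A r)) :
    ∫⁻ ω, eventCount A ω ∂μ = ∑' r, μ (A r) :=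
  (lintegral_tsum fun r => (measurable_const.indicator (hA r)).aemeasurable).trans
    (tsum_congr fun r => lintegral_indicator_one (hA r))

lemma lintegral_eventCount_mul (hA : ∀ r, MeasurableSet (A r)) (hB : ∀ r, MeasurableSet (B r)) :
    ∫⁻ ω, eventCount A ω * eventCount B ω ∂μ = ∑' q : ι × ι, μ (A q.1 ∩ B q.2) := by
  have hprod : ∀ ω, eventCount A ω * eventCount B ω
      = ∑' q : ι × ι, (A q.1 ∩ B q.2).indicator 1 ω := fun ω => by
    simp only [Set.inter_indicator_one, Pi.mul_apply]
    rw [ENNReal.tsum_prod', eventCount, ← ENNReal.tsum_mul_right]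
    exact tsum_congr fun r => ENNReal.tsum_mul_left.symm
  rw [lintegral_congr hprod]
  exact (lintegral_tsum fun q : ι × ι =>
      (measurable_const.indicator ((hA q.1).inter (hB q.2))).aemeasurable).trans
    (tsum_congr fun q => lintegral_indicator_one ((hA q.1).inter (hB q.2)))

/-- The covariance identity with `E[N_A] E[N_B]` and the diagonal products moved to the other
side, since in `ℝ≥0∞` no subtraction is available. -/
lemma lintegral_eventCount_mul_add_tsum (hA : ∀ r, MeasurableSet (A r))
    (hB : ∀ r, MeasurableSet (B r))
    (hindep : Pairwise fun r r' => μ (A r ∩ B r') = μ (A r) * μ (B r')) :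
    ∫⁻ ω, eventCount A ω * eventCount B ω ∂μ + ∑' r, μ (A r) * μ (B r)
      = (∑' r, μ (A r)) * (∑' r, μ (B r)) + ∑' r, μ (A r ∩ B r) := by
  classical
  calc ∫⁻ ω, eventCount A ω * eventCount B ω ∂μ + ∑' r, μ (A r) * μ (B r)
      = ∑' q : ι × ι, (μ (A q.1 ∩ B q.2) + if q.1 = q.2 then μ (A q.1) * μ (B q.1) else 0) := by
        rw [ENNReal.tsum_add, ENNReal.tsum_prod_ite_eq fun r => μ (A r) * μ (B r),
          lintegral_eventCount_mul hA hB]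
    _ = ∑' q : ι × ι, (μ (A q.1) * μ (B q.2) + if q.1 = q.2 then μ (A q.1 ∩ B q.1) else 0) := by
        refine tsum_congr fun ⟨r, r'⟩ => ?_
        rcases eq_or_ne r r' with rfl | hne
        · simp [add_comm]
        · simp [hne, hindep hne]
    _ = (∑' r, μ (A r)) * (∑' r, μ (B r)) + ∑' r, μ (A r ∩ B r) := by
        rw [ENNReal.tsum_add, ENNReal.tsum_prod_ite_eq fun r => μ (A r ∩ B r),
          ENNReal.tsum_prod', ← ENNReal.tsum_mul_right]
        exact congrArg (· + _) (tsum_congr fun r => ENNReal.tsum_mul_left (a := μ (A r)))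

lemma lintegral_eventCount_mul_add_tsum_ne_top (hA : ∀ r, MeasurableSet (A r))
    (hB : ∀ r, MeasurableSet (B r))
    (hindep : Pairwise fun r r' => μ (A r ∩ B r') = μ (A r) * μ (B r'))
    (hAfin : ∑' r, μ (A r) ≠ ∞) (hBfin : ∑' r, μ (B r) ≠ ∞) :
    ∫⁻ ω, eventCount A ω * eventCount B ω ∂μ + ∑' r, μ (A r) * μ (B r) ≠ ∞ := by
  have hdiag : ∑' r, μ (A r ∩ B r) ≠ ∞ :=
    ne_top_of_le_ne_top hAfin (ENNReal.tsum_le_tsum fun r => measure_mono Set.inter_subset_left)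
  rw [lintegral_eventCount_mul_add_tsum hA hB hindep]
  exact ENNReal.add_ne_top.2 ⟨ENNReal.mul_ne_top hAfin hBfin, hdiag⟩

lemma memLp_two_eventCount_toReal (hA : ∀ r, MeasurableSet (A r))
    (hindep : Pairwise fun r r' => μ (A r ∩ A r') = μ (A r) * μ (A r'))
    (hfin : ∑' r, μ (A r) ≠ ∞) :
    MemLp (fun ω => (eventCount A ω).toReal) 2 μ := by
  have hmeas := measurable_eventCount hA
  rw [memLp_two_iff_integrable_sq hmeas.ennreal_toReal.aestronglyMeasurable]
  simpa only [Pi.mul_apply, ENNReal.toReal_mul, sq] using integrable_toReal_of_lintegral_ne_top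
    (hmeas.mul hmeas).aemeasurable
    (ENNReal.add_ne_top.1 (lintegral_eventCount_mul_add_tsum_ne_top hA hA hindep hfin hfin)).1

lemma integral_eventCount_toReal (hA : ∀ r, MeasurableSet (A r)) (hfin : ∑' r, μ (A r) ≠ ∞) :
    ∫ ω, (eventCount A ω).toReal ∂μ = ∑' r, μ.real (A r) := by
  have hlint := lintegral_eventCount (μ := μ) hA
  rw [integral_toReal (measurable_eventCount hA).aemeasurable
      (ae_lt_top (measurable_eventCount hA) (hlint ▸ hfin)), hlint,
    ENNReal.tsum_toReal_eq (ENNReal.ne_top_of_tsum_ne_top hfin)]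
  rfl

lemma integral_eventCount_toReal_mul (hA : ∀ r, MeasurableSet (A r))
    (hB : ∀ r, MeasurableSet (B r))
    (hfin : ∫⁻ ω, eventCount A ω * eventCount B ω ∂μ ≠ ∞) :
    ∫ ω, (eventCount A ω).toReal * (eventCount B ω).toReal ∂μ
      = (∫⁻ ω, eventCount A ω * eventCount B ω ∂μ).toReal := by
  have hmeas := (measurable_eventCount hA).mul (measurable_eventCount hB)
  simp_rw [← ENNReal.toReal_mul]
  exact integral_toReal hmeas.aemeasurable (ae_lt_top hmeas hfin)

theorem integral_eventCount_mul_sub_mul_integral (hA : ∀ r, MeasurableSet (A r))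
    (hB : ∀ r, MeasurableSet (B r))
    (hindep : Pairwise fun r r' => μ (A r ∩ B r') = μ (A r) * μ (B r'))
    (hAfin : ∑' r, μ (A r) ≠ ∞) (hBfin : ∑' r, μ (B r) ≠ ∞) :
    (∫ ω, (eventCount A ω).toReal * (eventCount B ω).toReal ∂μ)
        - (∫ ω, (eventCount A ω).toReal ∂μ) * (∫ ω, (eventCount B ω).toReal ∂μ)
      = ∑' r, (μ.real (A r ∩ B r) - μ.real (A r) * μ.real (B r)) := by
  have key := lintegral_eventCount_mul_add_tsum hA hB hindep
  have hlhs := lintegral_eventCount_mul_add_tsum_ne_top hA hB hindep hAfin hBfin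
  obtain ⟨hmoment, hprod⟩ := ENNReal.add_ne_top.1 hlhs
  obtain ⟨-, hdiag⟩ := ENNReal.add_ne_top.1 (key ▸ hlhs)
  have hreal := congrArg ENNReal.toReal key
  rw [ENNReal.toReal_add hmoment hprod, ENNReal.toReal_add (ENNReal.mul_ne_top hAfin hBfin) hdiag,
    ENNReal.toReal_mul, ENNReal.tsum_toReal_eq (ENNReal.ne_top_of_tsum_ne_top hprod),
    ENNReal.tsum_toReal_eq (ENNReal.ne_top_of_tsum_ne_top hAfin),
    ENNReal.tsum_toReal_eq (ENNReal.ne_top_of_tsum_ne_top hBfin),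
    ENNReal.tsum_toReal_eq (ENNReal.ne_top_of_tsum_ne_top hdiag)] at hreal
  have hprod_summable := ENNReal.summable_toReal hprod
  simp only [ENNReal.toReal_mul] at hreal hprod_summable
  rw [integral_eventCount_toReal_mul hA hB hmoment, integral_eventCount_toReal hA hAfin,
    integral_eventCount_toReal hB hBfin]
  simp only [measureReal_def]
  rw [(ENNReal.summable_toReal hdiag).tsum_sub hprod_summable]
  linarith

end EventCount

section Exponential

lemma one_sub_exp_neg_mul_nonneg {t c : ℝ} (ht : 0 ≤ t) (hc : 0 ≤ c) :
    0 ≤ 1 - Real.exp (-t * c) :=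
  sub_nonneg.2 (Real.exp_le_one_iff.2 (by nlinarith))

lemma one_sub_exp_neg_mul_le (t c : ℝ) : 1 - Real.exp (-t * c) ≤ t * c := by
  linarith [Real.add_one_le_exp (-t * c)]

lemma one_sub_exp_min_sub_mul (s t c : ℝ) :
    (1 - Real.exp (-(min s t) * c)) - (1 - Real.exp (-s * c)) * (1 - Real.exp (-t * c))
      = Real.exp (-(max s t) * c) - Real.exp (-(s + t) * c) := by
  have hsum : Real.exp (-(s + t) * c) = Real.exp (-s * c) * Real.exp (-t * c) := by
    rw [← Real.exp_add]; ring_nf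
  rcases le_total s t with h | h
  · rw [min_eq_left h, max_eq_right h, hsum]; ring
  · rw [min_eq_right h, max_eq_left h, hsum]; ring

variable {ι : Type*} {p : ι → ℝ}

lemma summable_one_sub_exp_neg_mul (hp : ∀ r, 0 ≤ p r) (hpsum : Summable p) {t : ℝ}
    (ht : 0 ≤ t) : Summable fun r => 1 - Real.exp (-t * p r) :=
  (hpsum.mul_left t).of_nonneg_of_le (fun r => one_sub_exp_neg_mul_nonneg ht (hp r))
    (fun r => one_sub_exp_neg_mul_le t (p r))

lemma tsum_ofReal_one_sub_exp_neg_mul_ne_top (hp : ∀ r, 0 ≤ p r) (hpsum : Summable p) {t : ℝ}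
    (ht : 0 ≤ t) : ∑' r, ENNReal.ofReal (1 - Real.exp (-t * p r)) ≠ ∞ := by
  rw [← ENNReal.ofReal_tsum_of_nonneg (fun r => one_sub_exp_neg_mul_nonneg ht (hp r))
    (summable_one_sub_exp_neg_mul hp hpsum ht)]
  exact ENNReal.ofReal_ne_top

lemma tsum_one_sub_exp_neg_mul_sub (hp : ∀ r, 0 ≤ p r) (hpsum : Summable p) {u v : ℝ}
    (hu : 0 ≤ u) (hv : 0 ≤ v) :
    ∑' r, (1 - Real.exp (-u * p r)) - ∑' r, (1 - Real.exp (-v * p r))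
      = ∑' r, (Real.exp (-v * p r) - Real.exp (-u * p r)) := by
  rw [← (summable_one_sub_exp_neg_mul hp hpsum hu).tsum_sub
    (summable_one_sub_exp_neg_mul hp hpsum hv)]
  exact tsum_congr fun r => by ring

end Exponential

lemma measure_preimage_Iic_of_measure_lt {Ω : Type*} [MeasurableSpace Ω] {μ : Measure Ω}
    [IsProbabilityMeasure μ] {X : Ω → ℝ} (hX : Measurable X) {t q : ℝ} (hq : 0 ≤ q)
    (h : μ {ω | t < X ω} = ENNReal.ofReal q) :
    μ (X ⁻¹' Set.Iic t) = ENNReal.ofReal (1 - q) := by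
  have hcompl : X ⁻¹' Set.Iic t = {ω | t < X ω}ᶜ := by ext; simp
  rw [hcompl, prob_compl_eq_one_sub (measurableSet_lt measurable_const hX), h,
    ENNReal.ofReal_sub _ hq, ENNReal.ofReal_one]

lemma ProbabilityTheory.iIndepFun.pairwise_measure_preimage_inter {Ω ι β : Type*}
    [MeasurableSpace Ω] {μ : Measure Ω} [MeasurableSpace β] {X : ι → Ω → β}
    (hX : iIndepFun X μ) {S S' : Set β} (hS : MeasurableSet S) (hS' : MeasurableSet S') :
    Pairwise fun r r' => μ (X r ⁻¹' S ∩ X r' ⁻¹' S') = μ (X r ⁻¹' S) * μ (X r' ⁻¹' S') :=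
  fun _ _ hne => (hX.indepFun hne).measure_inter_preimage_eq_mul _ _ hS hS'

theorem stmt6
    {Ω : Type*} [MeasurableSpace Ω] {P : Measure Ω} [IsProbabilityMeasure P]
    {ι : Type*} [Countable ι]
    (p : ι → ℝ) (hp : ∀ r, 0 < p r) (hpsum : Summable p)
    (T : ι → Ω → ℝ) (hTmeas : ∀ r, Measurable (T r))
    (hTindep : iIndepFun T P)
    (hTexp : ∀ r, ∀ t : ℝ, 0 ≤ t →
      P {ω | t < T r ω} = ENNReal.ofReal (Real.exp (-(p r) * t)))
    (K : ℝ → Ω → ℝ) (hK : ∀ t ω, K t ω = ∑' r, if T r ω ≤ t then (1 : ℝ) else 0)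
    (Φ : ℝ → ℝ) (hΦ : ∀ t, Φ t = ∑' r, (1 - Real.exp (-t * p r))) :
    (∀ t : ℝ, 0 ≤ t → MemLp (K t) 2 P) ∧
    (∀ s t : ℝ, 0 ≤ s → 0 ≤ t →
      ((∫ ω, K s ω * K t ω ∂P) - (∫ ω, K s ω ∂P) * (∫ ω, K t ω ∂P)
          = Φ (s + t) - Φ (max s t)) ∧
      (Φ (s + t) - Φ (max s t)
          = ∑' r, (Real.exp (-(max s t) * p r) - Real.exp (-(s + t) * p r)))) := by
  have hp0 : ∀ r, 0 ≤ p r := fun r => (hp r).le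
  let A : ℝ → ι → Set Ω := fun t r => T r ⁻¹' Set.Iic t
  have hA : ∀ t r, MeasurableSet (A t r) := fun t r => hTmeas r measurableSet_Iic
  have hindep : ∀ s t, Pairwise fun r r' => P (A s r ∩ A t r') = P (A s r) * P (A t r') :=
    fun s t => hTindep.pairwise_measure_preimage_inter measurableSet_Iic measurableSet_Iic
  have hPA : ∀ t, 0 ≤ t → ∀ r, P (A t r) = ENNReal.ofReal (1 - Real.exp (-t * p r)) :=
    fun t ht r => measure_preimage_Iic_of_measure_lt (hTmeas r) (Real.exp_nonneg _)
      (by rw [hTexp r t ht, neg_mul_comm, mul_comm])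
  have hfin : ∀ t, 0 ≤ t → ∑' r, P (A t r) ≠ ∞ := fun t ht => by
    simpa only [hPA t ht] using tsum_ofReal_one_sub_exp_neg_mul_ne_top hp0 hpsum ht
  have hKA : ∀ t, K t = fun ω => (eventCount (A t) ω).toReal := fun t => funext fun ω => by
    rw [hK, eventCount_toReal]
    exact tsum_congr fun r => by by_cases h : T r ω ≤ t <;> simp [A, h]
  have hΦsub : ∀ s t, 0 ≤ s → 0 ≤ t → Φ (s + t) - Φ (max s t)
      = ∑' r, (Real.exp (-(max s t) * p r) - Real.exp (-(s + t) * p r)) := fun s t hs ht => by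
    rw [hΦ, hΦ]
    exact tsum_one_sub_exp_neg_mul_sub hp0 hpsum (add_nonneg hs ht) (le_max_of_le_left hs)
  refine ⟨fun t ht => hKA t ▸ memLp_two_eventCount_toReal (hA t) (hindep t t) (hfin t ht),
    fun s t hs ht => ⟨?_, hΦsub s t hs ht⟩⟩
  rw [hKA, hKA, integral_eventCount_mul_sub_mul_integral (hA s) (hA t) (hindep s t) (hfin s hs)
    (hfin t ht), hΦsub s t hs ht]
  refine tsum_congr fun r => ?_
  have hinter : A s r ∩ A t r = A (min s t) r := by ext ω; simp [A]
  simp only [hinter, measureReal_def, hPA _ (le_min hs ht), hPA s hs, hPA t ht,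
    ENNReal.toReal_ofReal (one_sub_exp_neg_mul_nonneg (le_min hs ht) (hp0 r)),
    ENNReal.toReal_ofReal (one_sub_exp_neg_mul_nonneg hs (hp0 r)),
    ENNReal.toReal_ofReal (one_sub_exp_neg_mul_nonneg ht (hp0 r))]
  exact one_sub_exp_min_sub_mul s t (p r)
end

section
/- Under Condition (6), for integers 1 ≤ i < j and all u, v ∈ ℝ, define C(s,t) := ∑_{r₁∈ℕ^i} e^{−s p_{r₁}} ∑_{r₂∈ℕ^{j−i}} (e^{−max(t−s,0) p_{r₁} p_{r₂}} − e^{−t p_{r₁} p_{r₂}}) for s, t ≥ 0. Then lim_{T→∞} C(e^{T+u}, e^{T+v}) / ((Φ_i(2e^T) − Φ_i(e^T)) (Φ_j(2e^T) − Φ_j(e^T)))^{1/2} = 0. -/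
open Filter Topology

/-- Product weight of a box `r` in generation `j`: `p_r = p_{r 0} ⋯ p_{r (j-1)}`. -/
noncomputable def prodP (p : ℕ → ℝ) (j : ℕ) (r : Fin j → ℕ) : ℝ := ∏ i, p (r i)

/-- Counting function of generation `j`: `ρ_j(x) = #{r ∈ ℕ^j : p_r ≥ 1/x}` (as a real number). -/
noncomputable def rhoJ (p : ℕ → ℝ) (j : ℕ) (x : ℝ) : ℝ :=
  (Nat.card {r : Fin j → ℕ // 1 / x ≤ prodP p j r} : ℝ)

/-- Expected number of occupied boxes in generation `j` of the Poissonized scheme: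
`Φ_j(t) = ∑_{r ∈ ℕ^j} (1 - e^{-t p_r})`. -/
noncomputable def PhiJ (p : ℕ → ℝ) (j : ℕ) (t : ℝ) : ℝ :=
  ∑' r : Fin j → ℕ, (1 - Real.exp (-t * prodP p j r))

/-- Cross-generation covariance:
`C(s,t) = ∑_{r₁∈ℕ^i} e^{-s p_{r₁}} ∑_{r₂∈ℕ^m} (e^{-max(t-s,0) p_{r₁} p_{r₂}} - e^{-t p_{r₁} p_{r₂}})`. -/
noncomputable def crossCov (p : ℕ → ℝ) (i m : ℕ) (s t : ℝ) : ℝ :=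
  ∑' r₁ : Fin i → ℕ, Real.exp (-s * prodP p i r₁) *
    ∑' r₂ : Fin m → ℕ,
      (Real.exp (-(max (t - s) 0) * (prodP p i r₁ * prodP p m r₂)) -
        Real.exp (-t * (prodP p i r₁ * prodP p m r₂)))

/-!
Write `V_j(t) = Φ_j(2t) - Φ_j(t) = ∑_r φ(t p_r)` with `φ(x) = e^{-x} - e^{-2x}`. Condition (6)
makes `G(t) = ρ(2t) - ρ(t)` slowly varying and integer valued, and
`V_1(t) = ∫_0^∞ e^{-y} G(t/y) dy ~ G(t)` by dominated convergence under Potter bounds.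
Since `V_{k+1}(t) = ∑_r V_1(t p_r)`, where the terms with `t p_r` small contribute
`O(V_k(t)) = o(V_{k+1}(t))`, every `V_k` is slowly varying; and a slowly varying `V_i` is
negligible against `V_j(t) = ∑_{r ∈ ℕ^{j-i}} V_i(t p_r)` because infinitely many `p_r` are
positive. Finally `C(s,t) ≤ ∑_r s p_r e^{-s p_r} ≤ 2 V_i(s/2)`, so the ratio is
`O(V_i(e^T) / √(V_i(e^T) V_j(e^T))) = O(√(V_i(e^T) / V_j(e^T))) → 0`.
-/

open Filter Topology Asymptotics MeasureTheory Set Real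

/-- The variance `e^{-x} (1 - e^{-x})` of the indicator that a box receiving a Poisson(`x`)
number of balls is occupied. -/
noncomputable def varKernel (x : ℝ) : ℝ := exp (-x) - exp (-(2 * x))

lemma varKernel_nonneg {x : ℝ} (hx : 0 ≤ x) : 0 ≤ varKernel x := by
  unfold varKernel
  linarith [exp_le_exp.2 (by linarith : -(2 * x) ≤ -x)]

lemma varKernel_le_self {x : ℝ} (hx : 0 ≤ x) : varKernel x ≤ x := by
  have h := add_one_le_exp (-x)
  have hexp : exp (-(2 * x)) = exp (-x) * exp (-x) := by rw [← exp_add]; ring_nf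
  rw [varKernel, hexp]
  nlinarith [exp_le_one_iff.2 (neg_nonpos.2 hx), exp_pos (-x)]

lemma exp_neg_mul_le_varKernel {x : ℝ} (hx₀ : 0 ≤ x) (hx₁ : x ≤ 1) :
    exp (-2) * x ≤ varKernel x := by
  have h := add_one_le_exp x
  have hexp : exp (-(2 * x)) = exp (-x) * exp (-x) := by rw [← exp_add]; ring_nf
  have hinv : exp x * exp (-x) = 1 := by rw [← exp_add]; simp
  have h2 : exp (-2) ≤ exp (-(2 * x)) := exp_le_exp.2 (by linarith)
  rw [varKernel]
  nlinarith [exp_pos (-x), exp_pos x]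

lemma mul_exp_neg_le_varKernel (x : ℝ) : x * exp (-x) ≤ 2 * varKernel (x / 2) := by
  have h := add_one_le_exp (x / 2)
  have hexp : exp (-x) = exp (-(x / 2)) * exp (-(x / 2)) := by rw [← exp_add]; ring_nf
  have hinv : exp (x / 2) * exp (-(x / 2)) = 1 := by rw [← exp_add]; simp
  rw [varKernel, show 2 * (x / 2) = x by ring, hexp]
  nlinarith [exp_pos (-(x / 2)), exp_pos (x / 2)]

lemma integral_Ioc_exp_neg {x : ℝ} (hx : 0 ≤ x) :
    ∫ y in Ioi 0, (Ioc x (2 * x)).indicator (fun y => exp (-y)) y = varKernel x := by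
  rw [setIntegral_indicator measurableSet_Ioc,
    inter_eq_self_of_subset_right (Ioc_subset_Ioi_self.trans (Ioi_subset_Ioi hx)),
    ← intervalIntegral.integral_of_le (by linarith), intervalIntegral.integral_comp_neg
      fun y => exp y, integral_exp, varKernel]

lemma exp_neg_sub_exp_neg_le {x y : ℝ} (hx : 0 ≤ x) (hxy : x ≤ y) :
    exp (-x) - exp (-y) ≤ y - x := by
  have h := add_one_le_exp (x - y)
  have hexp : exp (-y) = exp (-x) * exp (x - y) := by rw [← exp_add]; ring_nf
  rw [hexp]
  nlinarith [exp_le_one_iff.2 (neg_nonpos.2 hx), exp_pos (-x)]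

section Weights

variable {p : ℕ → ℝ}

lemma prodP_nonneg (hp0 : ∀ k, 0 ≤ p k) {j : ℕ} (r : Fin j → ℕ) : 0 ≤ prodP p j r :=
  Finset.prod_nonneg fun i _ => hp0 (r i)

lemma prodP_append {a b : ℕ} (r₁ : Fin a → ℕ) (r₂ : Fin b → ℕ) :
    prodP p (a + b) (Fin.append r₁ r₂) = prodP p a r₁ * prodP p b r₂ := by
  simp [prodP, Fin.prod_univ_add]

lemma prodP_cons {n : ℕ} (k : ℕ) (r : Fin n → ℕ) :
    prodP p (n + 1) (Fin.cons k r) = p k * prodP p n r := by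
  simp [prodP, Fin.prod_univ_succ]

lemma hasSum_prodP (hp0 : ∀ k, 0 ≤ p k) (hp : HasSum p 1) : ∀ j, HasSum (prodP p j) 1
  | 0 => by simpa [prodP] using hasSum_fintype (prodP p 0)
  | n + 1 => by
    have ih := hasSum_prodP hp0 hp n
    have hcons : prodP p (n + 1) ∘ Fin.consEquiv (fun _ => ℕ) = fun q => p q.1 * prodP p n q.2 :=
      funext fun q => prodP_cons q.1 q.2
    rw [← (Fin.consEquiv fun _ => ℕ).hasSum_iff, hcons, ← mul_one (1 : ℝ)]
    exact hp.mul ih (hp.summable.mul_of_nonneg ih.summable hp0 (prodP_nonneg hp0))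

end Weights

noncomputable def varJ (p : ℕ → ℝ) (j : ℕ) (t : ℝ) : ℝ :=
  ∑' r : Fin j → ℕ, varKernel (t * prodP p j r)

section Variance

variable {p : ℕ → ℝ} (hp0 : ∀ k, 0 ≤ p k) (hp : HasSum p 1)
include hp0 hp

lemma summable_varKernel_mul_prodP (j : ℕ) {t : ℝ} (ht : 0 ≤ t) :
    Summable fun r : Fin j → ℕ => varKernel (t * prodP p j r) :=
  .of_nonneg_of_le (fun r => varKernel_nonneg (mul_nonneg ht (prodP_nonneg hp0 r)))
    (fun r => varKernel_le_self (mul_nonneg ht (prodP_nonneg hp0 r)))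
    ((hasSum_prodP hp0 hp j).summable.mul_left t)

lemma varJ_le_self (j : ℕ) {t : ℝ} (ht : 0 ≤ t) : varJ p j t ≤ t := by
  calc varJ p j t ≤ ∑' r, t * prodP p j r :=
        (summable_varKernel_mul_prodP hp0 hp j ht).tsum_le_tsum
          (fun r => varKernel_le_self (mul_nonneg ht (prodP_nonneg hp0 r)))
          ((hasSum_prodP hp0 hp j).summable.mul_left t)
    _ = t := by rw [tsum_mul_left, (hasSum_prodP hp0 hp j).tsum_eq, mul_one]

lemma PhiJ_two_mul_sub (j : ℕ) {t : ℝ} (ht : 0 ≤ t) :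
    PhiJ p j (2 * t) - PhiJ p j t = varJ p j t := by
  have hsummable : ∀ s : ℝ, 0 ≤ s → Summable fun r : Fin j → ℕ => 1 - exp (-s * prodP p j r) :=
    fun s hs => .of_nonneg_of_le
      (fun r => sub_nonneg.2 (exp_le_one_iff.2 (by nlinarith [prodP_nonneg hp0 r])))
      (fun r => by linarith [add_one_le_exp (-s * prodP p j r)])
      ((hasSum_prodP hp0 hp j).summable.mul_left s)
  rw [PhiJ, PhiJ, ← (hsummable _ (by linarith)).tsum_sub (hsummable t ht)]
  refine tsum_congr fun r => ?_
  rw [varKernel]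
  ring_nf

lemma varJ_add (a b : ℕ) {t : ℝ} (ht : 0 ≤ t) :
    varJ p (a + b) t = ∑' r : Fin a → ℕ, varJ p b (t * prodP p a r) := by
  have hsplit : ∀ q : (Fin a → ℕ) × (Fin b → ℕ),
      varKernel (t * prodP p (a + b) (Fin.appendEquiv a b q)) =
        varKernel (t * prodP p a q.1 * prodP p b q.2) := fun q => by
    rw [mul_assoc, ← prodP_append]; rfl
  have hsummable : Summable fun q : (Fin a → ℕ) × (Fin b → ℕ) =>
      varKernel (t * prodP p a q.1 * prodP p b q.2) :=
    ((summable_varKernel_mul_prodP hp0 hp (a + b) ht).comp_injective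
      (Fin.appendEquiv a b).injective).congr hsplit
  calc varJ p (a + b) t
      = ∑' q : (Fin a → ℕ) × (Fin b → ℕ),
          varKernel (t * prodP p (a + b) (Fin.appendEquiv a b q)) :=
        ((Fin.appendEquiv a b).tsum_eq _).symm
    _ = ∑' q : (Fin a → ℕ) × (Fin b → ℕ), varKernel (t * prodP p a q.1 * prodP p b q.2) :=
        tsum_congr hsplit
    _ = ∑' (r₁ : Fin a → ℕ) (r₂ : Fin b → ℕ), varKernel (t * prodP p a r₁ * prodP p b r₂) :=
        hsummable.tsum_prod
    _ = _ := rfl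

end Variance

lemma varJ_nonneg {p : ℕ → ℝ} (hp0 : ∀ k, 0 ≤ p k) (j : ℕ) {t : ℝ} (ht : 0 ≤ t) :
    0 ≤ varJ p j t :=
  tsum_nonneg fun r => varKernel_nonneg (mul_nonneg ht (prodP_nonneg hp0 r))

lemma varJ_one (p : ℕ → ℝ) (t : ℝ) : varJ p 1 t = ∑' k, varKernel (t * p k) := by
  rw [varJ, ← (Equiv.funUnique (Fin 1) ℕ).symm.tsum_eq]
  simp [prodP]

noncomputable def dyadicIncr (g : ℝ → ℝ) (x : ℝ) : ℝ := g (2 * x) - g x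

section Monotone

variable {g : ℝ → ℝ} (hg : Monotone g)
include hg

lemma dyadicIncr_nonneg {x : ℝ} (hx : 0 ≤ x) : 0 ≤ dyadicIncr g x :=
  sub_nonneg.2 (hg (by linarith))

lemma dyadicIncr_mul_le {x c : ℝ} (hx : 0 ≤ x) (hc : c ∈ Icc (1 : ℝ) 2) :
    dyadicIncr g (c * x) ≤ dyadicIncr g (2 * x) + dyadicIncr g x := by
  have h₁ : g (2 * (c * x)) ≤ g (2 * (2 * x)) := hg (by nlinarith [hc.2])
  have h₂ : g x ≤ g (c * x) := hg (by nlinarith [hc.1])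
  simp only [dyadicIncr]
  linarith

lemma dyadicIncr_le_sub {x s : ℝ} (hx : 0 ≤ x) (hxs : x ≤ s) :
    dyadicIncr g x ≤ g (2 * s) - g 0 :=
  sub_le_sub (hg (by linarith)) (hg hx)

end Monotone

section Counting

variable {p : ℕ → ℝ}

lemma rhoJ_one_eq_ncard (p : ℕ → ℝ) (x : ℝ) : rhoJ p 1 x = {k | 1 / x ≤ p k}.ncard := by
  rw [rhoJ, ← Nat.card_coe_set_eq]
  congr 1
  exact Nat.card_congr (Equiv.subtypeEquiv (Equiv.funUnique (Fin 1) ℕ) fun r => by simp [prodP])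

lemma finite_setOf_le (hp : Summable p) {c : ℝ} (hc : 0 < c) : {k | c ≤ p k}.Finite := by
  simpa [eventually_cofinite] using hp.tendsto_cofinite_zero.eventually (gt_mem_nhds hc)

lemma monotone_rhoJ_one (hp0 : ∀ k, 0 ≤ p k) (hp : Summable p) : Monotone (rhoJ p 1) := by
  intro x y hxy
  rw [rhoJ_one_eq_ncard, rhoJ_one_eq_ncard]
  rcases le_or_gt x 0 with hx | hx
  · have huniv : {k | 1 / x ≤ p k} = univ :=
      eq_univ_of_forall fun k => (one_div_nonpos.2 hx).trans (hp0 k)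
    rw [huniv, infinite_univ.ncard, Nat.cast_zero]
    exact Nat.cast_nonneg _
  · exact_mod_cast ncard_le_ncard
      (fun k (hk : 1 / x ≤ p k) => (one_div_le_one_div_of_le hx hxy).trans hk)
      (finite_setOf_le hp (one_div_pos.2 (hx.trans_le hxy)))

lemma dyadicIncr_rhoJ_one_eq_ncard (hp : Summable p) {x : ℝ} (hx : 0 < x) :
    dyadicIncr (rhoJ p 1) x = {k | p k ∈ Ico (1 / (2 * x)) (1 / x)}.ncard := by
  have hsub : {k | 1 / x ≤ p k} ⊆ {k | 1 / (2 * x) ≤ p k} := fun k (hk : 1 / x ≤ p k) =>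
    (one_div_le_one_div_of_le hx (by linarith)).trans hk
  have hfin := finite_setOf_le hp (by positivity : 0 < 1 / (2 * x))
  have hdiff : {k | p k ∈ Ico (1 / (2 * x)) (1 / x)} =
      {k | 1 / (2 * x) ≤ p k} \ {k | 1 / x ≤ p k} := by
    ext k; simp [not_le]
  rw [dyadicIncr, rhoJ_one_eq_ncard, rhoJ_one_eq_ncard, hdiff, ncard_sdiff hsub (hfin.subset hsub),
    Nat.cast_sub (ncard_le_ncard hsub hfin)]

end Counting

/-- For eventually nonzero `f` this is the usual `f (c * x) / f x → 1`; stating it with `~`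
avoids the division. -/
def SlowlyVarying (f : ℝ → ℝ) : Prop :=
  ∀ c > 0, (fun x => f (c * x)) ~[atTop] f

namespace SlowlyVarying

variable {f g : ℝ → ℝ}

lemma of_isEquivalent (hg : SlowlyVarying g) (hfg : f ~[atTop] g) : SlowlyVarying f :=
  fun c hc => ((hfg.comp_tendsto (tendsto_id.const_mul_atTop hc)).trans (hg c hc)).trans hfg.symm

lemma inv (hf : SlowlyVarying f) : SlowlyVarying f⁻¹ :=
  fun c hc => (hf c hc).inv

lemma tendsto_div (hf : SlowlyVarying f) (hf0 : ∀ᶠ x in atTop, f x ≠ 0) {c : ℝ} (hc : 0 < c) :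
    Tendsto (fun x => f (c * x) / f x) atTop (𝓝 1) :=
  (isEquivalent_iff_tendsto_one hf0).1 (hf c hc)

lemma eventually_le_mul (hf : SlowlyVarying f) (hf0 : ∀ᶠ x in atTop, 0 ≤ f x) {c K : ℝ}
    (hc : 0 < c) (hK : 1 < K) : ∀ᶠ x in atTop, f (c * x) ≤ K * f x := by
  filter_upwards [(hf c hc).isLittleO.bound (sub_pos.2 hK), hf0] with x hx hx0
  rw [Pi.sub_apply, Real.norm_eq_abs, Real.norm_eq_abs, abs_of_nonneg hx0] at hx
  linarith [le_abs_self (f (c * x) - f x)]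

/-- Potter's bound with exponent `1/2`: the factor `√2` per doubling, from slow variation,
is iterated over the dyadic scales between `x` and `z * x`. -/
lemma eventually_le_mul_sqrt (hf : SlowlyVarying f) (hf0 : ∀ᶠ x in atTop, 0 ≤ f x) {A : ℝ}
    (hA : 0 ≤ A) (hloc : ∀ᶠ x in atTop, ∀ c ∈ Icc (1 : ℝ) 2, f (c * x) ≤ A * f x) :
    ∀ᶠ x in atTop, ∀ z ≥ 1, f (z * x) ≤ A * √z * f x := by
  obtain ⟨s, hs⟩ := eventually_atTop.1
    ((hf0.and hloc).and (hf.eventually_le_mul hf0 two_pos one_lt_sqrt_two))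
  have hdyadic : ∀ m : ℕ, ∀ x ≥ max s 0, ∀ z ∈ Icc (1 : ℝ) (2 ^ (m + 1)),
      f (z * x) ≤ A * √2 ^ m * f x := by
    intro m
    induction m with
    | zero =>
      intro x hx z hz
      simpa using (hs x (le_of_max_le_left hx)).1.2 z (by simpa using hz)
    | succ m ih =>
      intro x hx z hz
      obtain ⟨⟨hfx, -⟩, hdouble⟩ := hs x (le_of_max_le_left hx)
      rcases le_or_gt z (2 ^ (m + 1)) with hz' | hz'
      · calc f (z * x) ≤ A * √2 ^ m * f x := ih x hx z ⟨hz.1, hz'⟩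
          _ ≤ A * √2 ^ (m + 1) * f x := by
            gcongr
            exacts [one_le_sqrt.2 one_le_two, Nat.le_succ m]
      · have h2x : 2 * x ≥ max s 0 := by linarith [le_max_right s 0]
        have hz2 : z / 2 ∈ Icc (1 : ℝ) (2 ^ (m + 1)) := by
          have h2m : (1 : ℝ) ≤ 2 ^ m := one_le_pow₀ one_le_two
          constructor <;> linarith [hz.2, pow_succ (2 : ℝ) (m + 1), pow_succ (2 : ℝ) m]
        calc f (z * x) = f (z / 2 * (2 * x)) := by ring_nf
          _ ≤ A * √2 ^ m * f (2 * x) := ih (2 * x) h2x (z / 2) hz2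
          _ ≤ A * √2 ^ m * (√2 * f x) := by gcongr
          _ = A * √2 ^ (m + 1) * f x := by ring
  filter_upwards [eventually_ge_atTop (max s 0)] with x hx z hz
  obtain ⟨m, hm, hm'⟩ := exists_nat_pow_near hz one_lt_two
  have hsqrt : √2 ^ m ≤ √z :=
    le_sqrt_of_sq_le (by rwa [← pow_mul, mul_comm, pow_mul, sq_sqrt zero_le_two])
  calc f (z * x) ≤ A * √2 ^ m * f x := hdyadic m x hx z ⟨hz, hm'.le⟩
    _ ≤ A * √z * f x := by
      have := (hs x (le_of_max_le_left hx)).1.1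
      gcongr

end SlowlyVarying

lemma mul_sqrt_le_mul_sqrt_add_inv {a C y : ℝ} (ha : 0 ≤ a) (haC : a ≤ C) (hy : 0 < y) :
    a * √y ≤ C * (√y + (√y)⁻¹) ∧ a * (√y)⁻¹ ≤ C * (√y + (√y)⁻¹) := by
  have hsy : 0 < √y := sqrt_pos.2 hy
  have hinv : 0 < (√y)⁻¹ := inv_pos.2 hsy
  constructor <;> nlinarith

section DyadicPotter

variable {g : ℝ → ℝ} (hg : Monotone g) (hG : SlowlyVarying (dyadicIncr g))
include hg hG

lemma eventually_dyadicIncr_mul_le :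
    ∀ᶠ x in atTop, ∀ c ∈ Icc (1 : ℝ) 2,
      dyadicIncr g (c * x) ≤ 3 * dyadicIncr g x ∧ dyadicIncr g x ≤ 6 * dyadicIncr g (c * x) := by
  have hG0 : ∀ᶠ x in atTop, 0 ≤ dyadicIncr g x :=
    (eventually_ge_atTop 0).mono fun x hx => dyadicIncr_nonneg hg hx
  have hdouble := hG.eventually_le_mul hG0 two_pos one_lt_two
  have hhalf := (tendsto_id.const_mul_atTop two_pos).eventually
    (hG.eventually_le_mul hG0 one_half_pos one_lt_two)
  obtain ⟨s, hs⟩ := eventually_atTop.1 (hdouble.and hhalf)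
  have hup : ∀ x ≥ max s 0, ∀ c ∈ Icc (1 : ℝ) 2, dyadicIncr g (c * x) ≤ 3 * dyadicIncr g x :=
    fun x hx c hc => by
      linarith [dyadicIncr_mul_le hg (le_of_max_le_right hx) hc, (hs x (le_of_max_le_left hx)).1]
  filter_upwards [eventually_ge_atTop (max s 0)] with x hx c hc
  refine ⟨hup x hx c hc, ?_⟩
  have hcx : c * x ≥ max s 0 := by nlinarith [hc.1, le_max_right s 0]
  have hc0 : 0 < c := by linarith [hc.1]
  have h2c : 2 / c ∈ Icc (1 : ℝ) 2 := by
    constructor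
    · rw [le_div_iff₀ hc0]; linarith [hc.2]
    · rw [div_le_iff₀ hc0]; linarith [hc.1]
  have hhalf_x : dyadicIncr g x ≤ 2 * dyadicIncr g (2 * x) := by
    simpa [← mul_assoc] using (hs x (le_of_max_le_left hx)).2
  have h2x : 2 * x = 2 / c * (c * x) := by field_simp
  linarith [hup (c * x) hcx (2 / c) h2c, h2x ▸ hhalf_x]

/-- Three regimes for `x = t / y`: `x ≥ t` (Potter bound for `G = dyadicIncr g`), `s ≤ x ≤ t`
(Potter bound for `G⁻¹`), and `x < s`, where `G x ≤ g (2 * s) - g 0` by monotonicity. -/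
lemma exists_eventually_dyadicIncr_div_le (hG1 : ∀ᶠ x in atTop, 1 ≤ dyadicIncr g x) :
    ∃ C, ∀ᶠ t in atTop, ∀ y > 0, dyadicIncr g (t / y) ≤ C * (√y + (√y)⁻¹) * dyadicIncr g t := by
  have hloc := eventually_dyadicIncr_mul_le hg hG
  have hup := hG.eventually_le_mul_sqrt (hG1.mono fun x hx => by linarith)
    (by norm_num : (0 : ℝ) ≤ 3) (hloc.mono fun x hx c hc => (hx c hc).1)
  have hdown := hG.inv.eventually_le_mul_sqrt (hG1.mono fun x hx => inv_nonneg.2 (by linarith))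
    (by norm_num : (0 : ℝ) ≤ 6) <| (hloc.and hG1).mono fun x ⟨hx, hx1⟩ c hc => by
      have := (hx c hc).2
      rw [Pi.inv_apply, Pi.inv_apply, inv_eq_one_div, ← div_eq_mul_inv,
        div_le_div_iff₀ (by linarith) (by linarith)]
      linarith
  obtain ⟨s, hs⟩ := eventually_atTop.1 ((hup.and hdown).and hG1)
  set B := g (2 * max s 1) - g 0
  have hB : 0 ≤ B := sub_nonneg.2 (hg (by linarith [le_max_right s 1]))
  refine ⟨9 + B, ?_⟩
  filter_upwards [eventually_ge_atTop (max s 1)] with t ht y hy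
  obtain ⟨⟨hupt, -⟩, hGt⟩ := hs t (le_of_max_le_left ht)
  rcases le_or_gt y 1 with hy1 | hy1
  · calc dyadicIncr g (t / y) = dyadicIncr g (y⁻¹ * t) := by rw [div_eq_inv_mul]
      _ ≤ 3 * √y⁻¹ * dyadicIncr g t := hupt y⁻¹ (one_le_inv₀ hy |>.2 hy1)
      _ ≤ (9 + B) * (√y + (√y)⁻¹) * dyadicIncr g t := by
        rw [sqrt_inv]
        exact mul_le_mul_of_nonneg_right
          (mul_sqrt_le_mul_sqrt_add_inv (by norm_num) (by linarith) hy).2 (by linarith)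
  rcases le_or_gt (max s 1) (t / y) with hty | hty
  · obtain ⟨⟨-, hdownty⟩, hGty⟩ := hs (t / y) (le_of_max_le_left hty)
    have key := hdownty y hy1.le
    rw [show y * (t / y) = t by field_simp, Pi.inv_apply, Pi.inv_apply, ← div_eq_mul_inv,
      inv_eq_one_div, div_le_div_iff₀ (by linarith) (by linarith)] at key
    calc dyadicIncr g (t / y) ≤ 6 * √y * dyadicIncr g t := by linarith
      _ ≤ (9 + B) * (√y + (√y)⁻¹) * dyadicIncr g t :=
        mul_le_mul_of_nonneg_right
          (mul_sqrt_le_mul_sqrt_add_inv (by norm_num) (by linarith) hy).1 (by linarith)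
  · have hty0 : 0 ≤ t / y := div_nonneg (by linarith [le_max_right s 1]) hy.le
    calc dyadicIncr g (t / y) ≤ B * 1 := by simpa using dyadicIncr_le_sub hg hty0 hty.le
      _ ≤ (9 + B) * (√y + (√y)⁻¹) * dyadicIncr g t := by
        have h1 : 1 ≤ √y := one_le_sqrt.2 hy1.le
        have := (mul_sqrt_le_mul_sqrt_add_inv (C := 9 + B) hB (by linarith) hy).1
        gcongr
        nlinarith

end DyadicPotter

lemma integrableOn_exp_neg_mul_sqrt_add_inv :
    IntegrableOn (fun y => exp (-y) * (√y + (√y)⁻¹)) (Ioi 0) := by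
  refine ((GammaIntegral_convergent (s := 3 / 2) (by norm_num)).add
    (GammaIntegral_convergent (s := 1 / 2) (by norm_num))).congr_fun (fun y hy => ?_)
    measurableSet_Ioi
  rw [sqrt_eq_rpow, ← rpow_neg (le_of_lt hy)]
  norm_num
  ring

/-- Dominated convergence, with the Potter bound as integrable majorant. -/
lemma SlowlyVarying.integral_exp_neg_mul_div_isEquivalent {g : ℝ → ℝ} (hg : SlowlyVarying g)
    (hmeas : Measurable g) (hg0 : ∀ x, 0 < x → 0 ≤ g x) (hpos : ∀ᶠ t in atTop, 0 < g t) {C : ℝ}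
    (hbound : ∀ᶠ t in atTop, ∀ y > 0, g (t / y) ≤ C * (√y + (√y)⁻¹) * g t) :
    (fun t => ∫ y in Ioi 0, exp (-y) * g (t / y)) ~[atTop] g := by
  refine isEquivalent_of_tendsto_one ?_
  have hdom : ∀ᶠ t in atTop, ∀ᵐ y ∂volume.restrict (Ioi 0),
      ‖exp (-y) * g (t / y) / g t‖ ≤ C * (exp (-y) * (√y + (√y)⁻¹)) := by
    filter_upwards [hbound, hpos, eventually_gt_atTop 0] with t hb ht0 ht
    refine ae_restrict_of_forall_mem measurableSet_Ioi fun y (hy : 0 < y) => ?_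
    rw [norm_of_nonneg (div_nonneg (mul_nonneg (exp_pos _).le (hg0 _ (div_pos ht hy))) ht0.le),
      div_le_iff₀ ht0]
    calc exp (-y) * g (t / y) ≤ exp (-y) * (C * (√y + (√y)⁻¹) * g t) := by
          gcongr; exact hb y hy
      _ = C * (exp (-y) * (√y + (√y)⁻¹)) * g t := by ring
  have hlim : ∀ᵐ y ∂volume.restrict (Ioi 0),
      Tendsto (fun t => exp (-y) * g (t / y) / g t) atTop (𝓝 (exp (-y))) := by
    refine ae_restrict_of_forall_mem measurableSet_Ioi fun y (hy : 0 < y) => ?_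
    have h := (hg.tendsto_div (hpos.mono fun t ht => ht.ne') (inv_pos.2 hy)).const_mul (exp (-y))
    rw [mul_one] at h
    refine h.congr fun t => ?_
    rw [mul_div_assoc, div_eq_inv_mul t y]
  have h := tendsto_integral_filter_of_dominated_convergence _
    (Eventually.of_forall fun t => (by fun_prop : Measurable fun y => exp (-y) * g (t / y) / g t)
      |>.aestronglyMeasurable) hdom (integrableOn_exp_neg_mul_sqrt_add_inv.const_mul C) hlim
  rw [integral_exp_neg_Ioi, neg_zero, exp_zero] at h
  exact h.congr fun t => integral_div _ _

lemma tsum_indicator_Ioc_exp_neg {p : ℕ → ℝ} (hp : Summable p) {t y : ℝ} (ht : 0 < t) (hy : 0 < y) :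
    ∑' k, (Ioc (t * p k) (2 * (t * p k))).indicator (fun y => exp (-y)) y =
      exp (-y) * dyadicIncr (rhoJ p 1) (t / y) := by
  set S := {k | p k ∈ Ico (1 / (2 * (t / y))) (1 / (t / y))}
  have hS : ∀ k, y ∈ Ioc (t * p k) (2 * (t * p k)) ↔ k ∈ S := fun k => by
    change _ ↔ p k ∈ Ico (1 / (2 * (t / y))) (1 / (t / y))
    rw [mem_Ioc, mem_Ico, show 1 / (2 * (t / y)) = y / (2 * t) by field_simp,
      one_div_div, div_le_iff₀ (by positivity), lt_div_iff₀ ht]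
    constructor <;> rintro ⟨h₁, h₂⟩ <;> constructor <;> linarith
  have hind : ∀ k, (Ioc (t * p k) (2 * (t * p k))).indicator (fun y => exp (-y)) y =
      S.indicator (fun _ => exp (-y)) k := fun k => by
    by_cases hk : k ∈ S <;> simp [hk, hS k]
  have : Finite S := ((finite_setOf_le hp (by positivity)).subset fun k hk => hk.1).to_subtype
  rw [tsum_congr hind, ← tsum_subtype, tsum_const, Nat.card_coe_set_eq, nsmul_eq_mul, mul_comm,
    dyadicIncr_rhoJ_one_eq_ncard hp (div_pos ht hy)]

section Representation

variable {p : ℕ → ℝ} (hp0 : ∀ k, 0 ≤ p k) (hp : HasSum p 1)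
include hp0 hp

lemma varJ_one_eq_integral {t : ℝ} (ht : 0 < t) :
    varJ p 1 t = ∫ y in Ioi 0, exp (-y) * dyadicIncr (rhoJ p 1) (t / y) := by
  set F : ℕ → ℝ → ℝ := fun k => (Ioc (t * p k) (2 * (t * p k))).indicator fun y => exp (-y)
  have hF : ∀ k, ∫ y in Ioi 0, F k y = varKernel (t * p k) :=
    fun k => integral_Ioc_exp_neg (mul_nonneg ht.le (hp0 k))
  have hFint : ∀ k, Integrable (F k) (volume.restrict (Ioi 0)) := fun k =>
    (continuous_exp.comp continuous_neg).integrableOn_Ioc.integrable_indicator measurableSet_Ioc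
      |>.restrict
  have hFsum : Summable fun k => ∫ y in Ioi 0, ‖F k y‖ := by
    have hnorm : ∀ k, ∫ y in Ioi 0, ‖F k y‖ = varKernel (t * p k) := fun k => by
      rw [← hF k]
      exact integral_congr_ae (ae_of_all _ fun y =>
        norm_of_nonneg (indicator_nonneg (fun y _ => (exp_pos (-y)).le) y))
    simp_rw [hnorm]
    exact .of_nonneg_of_le (fun k => varKernel_nonneg (mul_nonneg ht.le (hp0 k)))
      (fun k => varKernel_le_self (mul_nonneg ht.le (hp0 k))) (hp.summable.mul_left t)
  calc varJ p 1 t = ∑' k, ∫ y in Ioi 0, F k y := by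
        rw [varJ_one]; exact tsum_congr fun k => (hF k).symm
    _ = ∫ y in Ioi 0, ∑' k, F k y := integral_tsum_of_summable_integral_norm hFint hFsum
    _ = ∫ y in Ioi 0, exp (-y) * dyadicIncr (rhoJ p 1) (t / y) :=
      setIntegral_congr_fun measurableSet_Ioi fun y hy =>
        tsum_indicator_Ioc_exp_neg hp.summable ht hy

end Representation

section Regularity

variable {g L : ℝ → ℝ}
  (h : ∀ lam > 0, Tendsto (fun t => (g (lam * t) - g t) / L t) atTop (𝓝 (log lam)))
include h

lemma dyadicIncr_comp_mul_isEquivalent {c : ℝ} (hc : 0 < c) :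
    (fun t => dyadicIncr g (c * t)) ~[atTop] fun t => log 2 * L t := by
  refine isEquivalent_of_tendsto_one ?_
  have hlim := ((h (2 * c) (by positivity)).sub (h c hc)).div_const (log 2)
  rw [log_mul two_ne_zero hc.ne', add_sub_cancel_right, div_self (log_pos one_lt_two).ne'] at hlim
  refine hlim.congr fun t => ?_
  simp only [Pi.div_apply, dyadicIncr, mul_assoc]
  ring

lemma slowlyVarying_dyadicIncr : SlowlyVarying (dyadicIncr g) := fun c hc =>
  (dyadicIncr_comp_mul_isEquivalent h hc).trans <| by
    simpa using (dyadicIncr_comp_mul_isEquivalent h one_pos).symm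

end Regularity

lemma eventually_one_le_dyadicIncr_rhoJ {p : ℕ → ℝ} {L : ℝ → ℝ} (hp : Summable p)
    (h : Tendsto (fun t => (rhoJ p 1 (2 * t) - rhoJ p 1 t) / L t) atTop (𝓝 (log 2))) :
    ∀ᶠ t in atTop, 1 ≤ dyadicIncr (rhoJ p 1) t := by
  filter_upwards [h.eventually_ne (log_pos one_lt_two).ne', eventually_gt_atTop 0] with t ht ht0
  have hne : dyadicIncr (rhoJ p 1) t ≠ 0 := (div_ne_zero_iff.1 ht).1
  rw [dyadicIncr_rhoJ_one_eq_ncard hp ht0] at hne ⊢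
  exact Nat.one_le_cast.2 (Nat.one_le_iff_ne_zero.2 (by exact_mod_cast hne))

section Mixtures

variable {ι : Type*} {f : ℝ → ℝ} {w : ι → ℝ}

lemma SlowlyVarying.isLittleO_tsum_comp_mul (hf : SlowlyVarying f) (hf0 : ∀ x, 0 ≤ x → 0 ≤ f x)
    (hw0 : ∀ i, 0 ≤ w i) (hw : {i | 0 < w i}.Infinite)
    (hsum : ∀ t, 0 ≤ t → Summable fun i => f (t * w i)) :
    f =o[atTop] fun t => ∑' i, f (t * w i) := by
  refine isLittleO_iff.2 fun ε hε => ?_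
  obtain ⟨N, hN⟩ := exists_nat_gt (2 / ε)
  obtain ⟨F, hFw, hFcard⟩ := hw.exists_subset_card_eq N
  have hclose : ∀ᶠ t in atTop, ∀ i ∈ F, f t / 2 ≤ f (t * w i) := by
    rw [eventually_all_finset]
    intro i hi
    filter_upwards [(hf (w i) (hFw hi)).isLittleO.bound one_half_pos, eventually_ge_atTop 0]
      with t ht ht0
    rw [Pi.sub_apply, Real.norm_eq_abs, norm_of_nonneg (hf0 t ht0)] at ht
    rw [mul_comm]
    linarith [neg_abs_le (f (w i * t) - f t)]
  filter_upwards [hclose, eventually_ge_atTop 0] with t ht ht0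
  have hterm : ∀ i, 0 ≤ f (t * w i) := fun i => hf0 _ (mul_nonneg ht0 (hw0 i))
  have hlower : N * (f t / 2) ≤ ∑' i, f (t * w i) :=
    calc N * (f t / 2) = ∑ i ∈ F, f t / 2 := by simp [hFcard]
      _ ≤ ∑ i ∈ F, f (t * w i) := Finset.sum_le_sum ht
      _ ≤ ∑' i, f (t * w i) := (hsum t ht0).sum_le_tsum F fun i _ => hterm i
  have hF0 : 0 ≤ ∑' i, f (t * w i) := tsum_nonneg hterm
  rw [norm_of_nonneg (hf0 t ht0), norm_of_nonneg hF0]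
  rw [div_lt_iff₀ hε] at hN
  nlinarith [hf0 t ht0]

lemma SlowlyVarying.abs_sub_le_add_indicator (hf : SlowlyVarying f)
    (hf0 : ∀ x, 0 ≤ x → 0 ≤ f x) (hfle : ∀ x, 0 ≤ x → f x ≤ x) {c ε : ℝ} (hc : 0 < c)
    (hε : 0 < ε) : ∃ s > 0, ∀ x, 0 ≤ x →
      |f (c * x) - f x| ≤ ε * f x + (c + 1) * (Iio s).indicator id x := by
  obtain ⟨s, hs⟩ := eventually_atTop.1 ((hf c hc).isLittleO.bound hε)
  refine ⟨max s 1, by positivity, fun x hx => ?_⟩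
  by_cases hxs : x ∈ Iio (max s 1)
  · rw [indicator_of_mem hxs, id]
    have := hf0 _ (mul_nonneg hc.le hx)
    have := hfle _ (mul_nonneg hc.le hx)
    rw [abs_le]
    constructor <;> nlinarith [hf0 x hx, hfle x hx]
  · rw [indicator_of_notMem hxs, mul_zero, add_zero]
    simpa [Real.norm_eq_abs, abs_of_nonneg (hf0 x hx)] using hs x (by
      linarith [le_max_left s 1, not_lt.1 (show ¬x < max s 1 from hxs)])

lemma SlowlyVarying.tsum_comp_mul (hf : SlowlyVarying f) (hf0 : ∀ x, 0 ≤ x → 0 ≤ f x)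
    (hfle : ∀ x, 0 ≤ x → f x ≤ x) (hw0 : ∀ i, 0 ≤ w i) (hw : Summable w)
    (htail : ∀ s > 0, (fun t => ∑' i, (Iio s).indicator id (t * w i)) =o[atTop]
      fun t => ∑' i, f (t * w i)) :
    SlowlyVarying fun t => ∑' i, f (t * w i) := by
  intro c hc
  refine isLittleO_iff.2 fun ε hε => ?_
  obtain ⟨s, hs, hpt⟩ := hf.abs_sub_le_add_indicator hf0 hfle hc (half_pos hε)
  have hsum : ∀ t, 0 ≤ t → Summable fun i => f (t * w i) := fun t ht =>
    .of_nonneg_of_le (fun i => hf0 _ (mul_nonneg ht (hw0 i)))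
      (fun i => hfle _ (mul_nonneg ht (hw0 i))) (hw.mul_left t)
  filter_upwards [(htail s hs).bound (by positivity : 0 < ε / 2 / (c + 1)), eventually_ge_atTop 0]
    with t htl ht
  have hnn : ∀ i, 0 ≤ t * w i := fun i => mul_nonneg ht (hw0 i)
  have hF0 : 0 ≤ ∑' i, f (t * w i) := tsum_nonneg fun i => hf0 _ (hnn i)
  have hind0 : ∀ i, 0 ≤ (Iio s).indicator id (t * w i) := fun i => by
    by_cases h : t * w i ∈ Iio s <;> simp [h, hnn i]
  have hind : Summable fun i => (Iio s).indicator id (t * w i) :=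
    .of_nonneg_of_le hind0 (fun i => by by_cases h : t * w i ∈ Iio s <;> simp [h, hnn i])
      (hw.mul_left t)
  have hsumc := hsum (c * t) (by positivity)
  have habs : Summable fun i => ‖f (c * t * w i) - f (t * w i)‖ := (hsumc.sub (hsum t ht)).norm
  rw [Real.norm_eq_abs, abs_of_nonneg (tsum_nonneg hind0), norm_of_nonneg hF0] at htl
  rw [Pi.sub_apply, ← hsumc.tsum_sub (hsum t ht), norm_of_nonneg hF0]
  calc ‖∑' i, (f (c * t * w i) - f (t * w i))‖
      ≤ ∑' i, ‖f (c * t * w i) - f (t * w i)‖ := norm_tsum_le_tsum_norm habs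
    _ ≤ ∑' i, (ε / 2 * f (t * w i) + (c + 1) * (Iio s).indicator id (t * w i)) :=
        habs.tsum_le_tsum (fun i => by rw [Real.norm_eq_abs, mul_assoc]; exact hpt _ (hnn i))
          (((hsum t ht).mul_left _).add (hind.mul_left _))
    _ = ε / 2 * ∑' i, f (t * w i) + (c + 1) * ∑' i, (Iio s).indicator id (t * w i) := by
        rw [((hsum t ht).mul_left _).tsum_add (hind.mul_left _), tsum_mul_left, tsum_mul_left]
    _ ≤ ε / 2 * ∑' i, f (t * w i) + (c + 1) * (ε / 2 / (c + 1) * ∑' i, f (t * w i)) := by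
        gcongr
    _ = ε * ∑' i, f (t * w i) := by field_simp; ring

end Mixtures

lemma infinite_setOf_prodP_pos {p : ℕ → ℝ} (hpinf : {k | 0 < p k}.Infinite) {n : ℕ} (hn : n ≠ 0) :
    {r : Fin n → ℕ | 0 < prodP p n r}.Infinite := by
  have hinj : Function.Injective fun k : ℕ => fun _ : Fin n => k :=
    fun k k' h => congrFun h ⟨0, Nat.pos_of_ne_zero hn⟩
  refine (hpinf.image hinj.injOn).mono ?_
  rintro _ ⟨k, hk, rfl⟩
  simpa [prodP] using pow_pos (show 0 < p k from hk) n

lemma indicator_Iio_le_varKernel {s x : ℝ} (hs : 0 < s) (hx : 0 ≤ x) :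
    (Iio s).indicator id x ≤ exp 2 * s * varKernel (x / s) := by
  by_cases h : x ∈ Iio s
  · have hker := exp_neg_mul_le_varKernel (div_nonneg hx hs.le) ((div_le_one hs).2 (le_of_lt h))
    have he : exp 2 * exp (-2) = 1 := by rw [← exp_add]; norm_num
    calc (Iio s).indicator id x = exp 2 * s * (exp (-2) * (x / s)) := by
          rw [indicator_of_mem h, id, ← mul_assoc, mul_assoc (exp 2), mul_comm s, ← mul_assoc, he]
          field_simp
      _ ≤ exp 2 * s * varKernel (x / s) := by gcongr
  · rw [indicator_of_notMem h]
    exact mul_nonneg (by positivity) (varKernel_nonneg (div_nonneg hx hs.le))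

section Generations

variable {p : ℕ → ℝ} (hp0 : ∀ k, 0 ≤ p k) (hp : HasSum p 1)
include hp0 hp

lemma summable_varJ_mul_prodP (a n : ℕ) {t : ℝ} (ht : 0 ≤ t) :
    Summable fun r : Fin n → ℕ => varJ p a (t * prodP p n r) :=
  .of_nonneg_of_le (fun r => varJ_nonneg hp0 a (mul_nonneg ht (prodP_nonneg hp0 r)))
    (fun r => varJ_le_self hp0 hp a (mul_nonneg ht (prodP_nonneg hp0 r)))
    ((hasSum_prodP hp0 hp n).summable.mul_left t)

variable (hpinf : {k | 0 < p k}.Infinite)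
include hpinf

lemma varJ_isLittleO_of_lt {a b : ℕ} (ha : SlowlyVarying (varJ p a)) (hab : a < b) :
    varJ p a =o[atTop] varJ p b := by
  obtain ⟨n, rfl⟩ : ∃ n, b = n + a := ⟨b - a, by omega⟩
  refine (ha.isLittleO_tsum_comp_mul (fun x hx => varJ_nonneg hp0 a hx) (prodP_nonneg hp0)
    (infinite_setOf_prodP_pos hpinf (by omega))
    fun t ht => summable_varJ_mul_prodP hp0 hp a n ht).congr' EventuallyEq.rfl ?_
  filter_upwards [eventually_ge_atTop 0] with t ht
  exact (varJ_add hp0 hp n a ht).symm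

lemma isLittleO_tsum_indicator_Iio {k : ℕ} (hk : SlowlyVarying (varJ p k)) {s : ℝ} (hs : 0 < s) :
    (fun t => ∑' r, (Iio s).indicator id (t * prodP p k r)) =o[atTop] varJ p (k + 1) := by
  refine IsBigO.trans_isLittleO (g := fun t => varJ p k (s⁻¹ * t)) ?_
    ((hk s⁻¹ (inv_pos.2 hs)).isBigO.trans_isLittleO
      (varJ_isLittleO_of_lt hp0 hp hpinf hk k.lt_succ_self))
  refine IsBigO.of_bound (exp 2 * s) ?_
  filter_upwards [eventually_ge_atTop 0] with t ht
  have hnn : ∀ r, 0 ≤ t * prodP p k r := fun r => mul_nonneg ht (prodP_nonneg hp0 r)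
  have hind0 : ∀ r, 0 ≤ (Iio s).indicator id (t * prodP p k r) := fun r => by
    by_cases h : t * prodP p k r ∈ Iio s <;> simp [h, hnn r]
  rw [norm_of_nonneg (tsum_nonneg hind0),
    norm_of_nonneg (varJ_nonneg hp0 k (mul_nonneg (inv_nonneg.2 hs.le) ht)), varJ, ← tsum_mul_left]
  have hle : ∀ r, (Iio s).indicator id (t * prodP p k r) ≤
      exp 2 * s * varKernel (s⁻¹ * t * prodP p k r) := fun r => by
    rw [show s⁻¹ * t * prodP p k r = t * prodP p k r / s by ring]
    exact indicator_Iio_le_varKernel hs (hnn r)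
  exact Summable.tsum_le_tsum hle
    (.of_nonneg_of_le hind0 (fun r => by by_cases h : t * prodP p k r ∈ Iio s <;> simp [h, hnn r])
      ((hasSum_prodP hp0 hp k).summable.mul_left t))
    ((summable_varKernel_mul_prodP hp0 hp k (by positivity)).mul_left _)

lemma slowlyVarying_varJ (h1 : SlowlyVarying (varJ p 1)) {k : ℕ} (hk : 1 ≤ k) :
    SlowlyVarying (varJ p k) := by
  induction k, hk using Nat.le_induction with
  | base => exact h1
  | succ k hk ih =>
    have hsplit : varJ p (k + 1) =ᶠ[atTop] fun t => ∑' r, varJ p 1 (t * prodP p k r) := by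
      filter_upwards [eventually_ge_atTop 0] with t ht
      exact varJ_add hp0 hp k 1 ht
    refine (h1.tsum_comp_mul (fun x hx => varJ_nonneg hp0 1 hx)
      (fun x hx => varJ_le_self hp0 hp 1 hx) (prodP_nonneg hp0) (hasSum_prodP hp0 hp k).summable
      fun s hs => ?_).of_isEquivalent hsplit.isEquivalent
    exact (isLittleO_tsum_indicator_Iio hp0 hp hpinf ih hs).congr' EventuallyEq.rfl hsplit

end Generations

lemma varJ_one_isEquivalent {p : ℕ → ℝ} (hp0 : ∀ k, 0 ≤ p k) (hp : HasSum p 1)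
    (hG : SlowlyVarying (dyadicIncr (rhoJ p 1)))
    (hG1 : ∀ᶠ x in atTop, 1 ≤ dyadicIncr (rhoJ p 1) x) :
    varJ p 1 ~[atTop] dyadicIncr (rhoJ p 1) := by
  have hmono := monotone_rhoJ_one hp0 hp.summable
  have hmeas : Measurable (dyadicIncr (rhoJ p 1)) :=
    (hmono.measurable.comp (measurable_const_mul 2)).sub hmono.measurable
  obtain ⟨C, hC⟩ := exists_eventually_dyadicIncr_div_le hmono hG hG1
  refine (EventuallyEq.isEquivalent ?_).trans (hG.integral_exp_neg_mul_div_isEquivalent hmeas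
    (fun x hx => dyadicIncr_nonneg hmono hx.le) (hG1.mono fun x hx => by linarith) hC)
  filter_upwards [eventually_gt_atTop 0] with t ht using varJ_one_eq_integral hp0 hp ht

lemma exp_neg_max_sub_exp_neg_mem_Icc {s t x : ℝ} (hs : 0 ≤ s) (ht : 0 ≤ t) (hx : 0 ≤ x) :
    exp (-(max (t - s) 0) * x) - exp (-t * x) ∈ Icc 0 (s * x) := by
  have hM : max (t - s) 0 * x ≤ t * x := mul_le_mul_of_nonneg_right (max_le (by linarith) ht) hx
  have hsM : t * x - max (t - s) 0 * x ≤ s * x := by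
    nlinarith [le_max_left (t - s) 0]
  rw [neg_mul, neg_mul]
  exact ⟨sub_nonneg.2 (exp_le_exp.2 (neg_le_neg hM)),
    (exp_neg_sub_exp_neg_le (mul_nonneg (le_max_right _ _) hx) hM).trans hsM⟩

section CrossCovariance

variable {p : ℕ → ℝ} (hp0 : ∀ k, 0 ≤ p k)
include hp0

lemma crossCov_nonneg (a m : ℕ) {s t : ℝ} (hs : 0 ≤ s) (ht : 0 ≤ t) : 0 ≤ crossCov p a m s t :=
  tsum_nonneg fun r₁ => mul_nonneg (exp_pos _).le <| tsum_nonneg fun r₂ =>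
    (exp_neg_max_sub_exp_neg_mem_Icc hs ht
      (mul_nonneg (prodP_nonneg hp0 r₁) (prodP_nonneg hp0 r₂))).1

lemma crossCov_le (hp : HasSum p 1) (a m : ℕ) {s t : ℝ} (hs : 0 ≤ s) (ht : 0 ≤ t) :
    crossCov p a m s t ≤ 2 * varJ p a (s / 2) := by
  have hinner : ∀ r₁ : Fin a → ℕ, ∑' r₂ : Fin m → ℕ,
      (exp (-(max (t - s) 0) * (prodP p a r₁ * prodP p m r₂)) -
        exp (-t * (prodP p a r₁ * prodP p m r₂))) ≤ s * prodP p a r₁ := fun r₁ => by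
    have hmem := fun r₂ => exp_neg_max_sub_exp_neg_mem_Icc hs ht
      (mul_nonneg (prodP_nonneg hp0 r₁) (prodP_nonneg hp0 (j := m) r₂))
    have hsum := ((hasSum_prodP hp0 hp m).mul_left (s * prodP p a r₁))
    rw [mul_one] at hsum
    refine (Summable.tsum_le_tsum (fun r₂ => (hmem r₂).2.trans_eq (by ring))
      (.of_nonneg_of_le (fun r₂ => (hmem r₂).1) (fun r₂ => (hmem r₂).2.trans_eq (by ring))
        hsum.summable) hsum.summable).trans_eq hsum.tsum_eq
  have hterm : ∀ r₁ : Fin a → ℕ, exp (-s * prodP p a r₁) * ∑' r₂ : Fin m → ℕ,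
      (exp (-(max (t - s) 0) * (prodP p a r₁ * prodP p m r₂)) -
        exp (-t * (prodP p a r₁ * prodP p m r₂))) ≤ 2 * varKernel (s / 2 * prodP p a r₁) :=
    fun r₁ => calc
      _ ≤ exp (-s * prodP p a r₁) * (s * prodP p a r₁) :=
        mul_le_mul_of_nonneg_left (hinner r₁) (exp_pos _).le
      _ = s * prodP p a r₁ * exp (-(s * prodP p a r₁)) := by ring_nf
      _ ≤ 2 * varKernel (s / 2 * prodP p a r₁) := by
        rw [div_mul_eq_mul_div]
        exact mul_exp_neg_le_varKernel _
  have hsum := (summable_varKernel_mul_prodP hp0 hp a (by positivity : (0 : ℝ) ≤ s / 2)).mul_left 2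
  rw [varJ, ← tsum_mul_left]
  exact Summable.tsum_le_tsum hterm (.of_nonneg_of_le (fun r₁ => mul_nonneg (exp_pos _).le
    (tsum_nonneg fun r₂ => (exp_neg_max_sub_exp_neg_mem_Icc hs ht
      (mul_nonneg (prodP_nonneg hp0 r₁) (prodP_nonneg hp0 r₂))).1)) hterm hsum) hsum

end CrossCovariance

lemma tendsto_div_sqrt_mul_nhds_zero {α : Type*} {l : Filter α} {a x y : α → ℝ}
    (ha : a =O[l] x) (hxy : x =o[l] y) (hx : ∀ᶠ t in l, 0 ≤ x t) (hy : ∀ᶠ t in l, 0 ≤ y t) :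
    Tendsto (fun t => a t / √(x t * y t)) l (𝓝 0) := by
  refine (ha.trans_isLittleO (isLittleO_iff.2 fun ε hε => ?_)).tendsto_div_nhds_zero
  filter_upwards [hxy.bound (pow_pos hε 2), hx, hy] with t ht hxt hyt
  rw [norm_of_nonneg hxt, norm_of_nonneg hyt] at ht
  rw [norm_of_nonneg hxt, norm_of_nonneg (sqrt_nonneg _), ← sqrt_sq hε.le,
    ← sqrt_mul (sq_nonneg ε)]
  exact le_sqrt_of_sq_le (by nlinarith)

theorem stmt7_general
    (p : ℕ → ℝ) (hp0 : ∀ k, 0 ≤ p k) (hp1 : ∑' k, p k = 1)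
    (hpinf : {k | 0 < p k}.Infinite)
    (β : ℝ)
    (ℓ : ℝ → ℝ)
    (h6 : ∀ lam > 0, Tendsto
      (fun t => (rhoJ p 1 (lam * t) - rhoJ p 1 t) / (Real.log t ^ β * ℓ (Real.log t)))
      atTop (𝓝 (Real.log lam)))
    (i j : ℕ) (hi : 1 ≤ i) (hij : i < j) (u v : ℝ) :
    Tendsto
      (fun T => crossCov p i (j - i) (Real.exp (T + u)) (Real.exp (T + v)) /
        Real.sqrt ((PhiJ p i (2 * Real.exp T) - PhiJ p i (Real.exp T)) *
          (PhiJ p j (2 * Real.exp T) - PhiJ p j (Real.exp T))))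
      atTop (𝓝 0) := by
  have hp : HasSum p 1 := by
    have hsum : Summable p := by
      by_contra h
      simp [tsum_eq_zero_of_not_summable h] at hp1
    exact hp1 ▸ hsum.hasSum
  have hG := slowlyVarying_dyadicIncr h6
  have hG1 := eventually_one_le_dyadicIncr_rhoJ hp.summable (h6 2 two_pos)
  have hVi : SlowlyVarying (varJ p i) :=
    slowlyVarying_varJ hp0 hp hpinf (hG.of_isEquivalent (varJ_one_isEquivalent hp0 hp hG hG1)) hi
  have hc : 0 < exp u / 2 := by positivity
  have hcross : (fun T => crossCov p i (j - i) (exp (T + u)) (exp (T + v))) =O[atTop]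
      fun T => varJ p i (exp u / 2 * exp T) := by
    refine IsBigO.of_bound 2 (Eventually.of_forall fun T => ?_)
    rw [norm_of_nonneg (crossCov_nonneg hp0 i (j - i) (exp_pos _).le (exp_pos _).le),
      norm_of_nonneg (varJ_nonneg hp0 i (by positivity)),
      show exp u / 2 * exp T = exp (T + u) / 2 by rw [exp_add]; ring]
    exact crossCov_le hp0 hp i (j - i) (exp_pos _).le (exp_pos _).le
  simp only [PhiJ_two_mul_sub hp0 hp _ (exp_pos _).le]
  exact tendsto_div_sqrt_mul_nhds_zero
    (hcross.trans ((hVi _ hc).comp_tendsto tendsto_exp_atTop).isBigO)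
    ((varJ_isLittleO_of_lt hp0 hp hpinf hVi hij).comp_tendsto tendsto_exp_atTop)
    (Eventually.of_forall fun T => varJ_nonneg hp0 i (exp_pos T).le)
    (Eventually.of_forall fun T => varJ_nonneg hp0 j (exp_pos T).le)

theorem stmt7
    (p : ℕ → ℝ) (hp0 : ∀ k, 0 ≤ p k) (hp1 : ∑' k, p k = 1)
    (hpinf : {k | 0 < p k}.Infinite)
    (β : ℝ) (hβ : 0 ≤ β)
    (ℓ : ℝ → ℝ) (hℓpos : ∀ x > 0, 0 < ℓ x)
    (hℓsv : ∀ c > 0, Tendsto (fun x => ℓ (c * x) / ℓ x) atTop (𝓝 1))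
    (h6 : ∀ lam > 0, Tendsto
      (fun t => (rhoJ p 1 (lam * t) - rhoJ p 1 t) / (Real.log t ^ β * ℓ (Real.log t)))
      atTop (𝓝 (Real.log lam)))
    (h60 : β = 0 → (∃ x₀, MonotoneOn ℓ (Set.Ici x₀)) ∧ Tendsto ℓ atTop atTop)
    (i j : ℕ) (hi : 1 ≤ i) (hij : i < j) (u v : ℝ) :
    Tendsto
      (fun T => crossCov p i (j - i) (Real.exp (T + u)) (Real.exp (T + v)) /
        Real.sqrt ((PhiJ p i (2 * Real.exp T) - PhiJ p i (Real.exp T)) *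
          (PhiJ p j (2 * Real.exp T) - PhiJ p j (Real.exp T))))
      atTop (𝓝 0) :=
  stmt7_general p hp0 hp1 hpinf β ℓ h6 i j hi hij u v
end

section
/- For all real numbers u ≤ v, ∫_ℝ (exp(−e^{−(x−v)}) − exp(−e^{−(x−u)} − e^{−(x−v)})) dx = log(1 + e^{−(v−u)}). -/
/-!
With `c = exp (-(v - u))` the integrand is `F (exp (v - x))` for
`F t = exp (-t) - exp (-(1 + c) * t)`. After the reflection `x ↦ v - x`, the substitution
`t = exp x` turns the integral into the Frullani integral
`∫₀^∞ (exp (-t) - exp (-(1 + c) * t)) / t dt = log (1 + c)`.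
-/

open Real MeasureTheory Set Filter

theorem integral_comp_exp {E : Type*} [NormedAddCommGroup E] [NormedSpace ℝ E] (g : ℝ → E) :
    ∫ x, g (exp x) = ∫ t in Ioi 0, t⁻¹ • g t := by
  have h := integral_image_eq_integral_abs_deriv_smul MeasurableSet.univ
    (fun x _ ↦ (hasDerivAt_exp x).hasDerivWithinAt) exp_injective.injOn fun t ↦ t⁻¹ • g t
  rw [image_univ, range_exp] at h
  simp [h, abs_of_pos (exp_pos _), smul_smul, (exp_pos _).ne']

theorem integrableOn_inv_mul_exp_neg_mul_sub {a b : ℝ} (ha : 0 < a) (hab : a ≤ b) :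
    IntegrableOn (fun t ↦ t⁻¹ * (exp (-(a * t)) - exp (-(b * t)))) (Ioi 0) := by
  refine ((exp_neg_integrableOn_Ioi 0 ha).const_mul (b - a)).mono' ?_ ?_
  · exact (ContinuousOn.mul (continuousOn_inv₀.mono fun t ht ↦ (mem_Ioi.1 ht).ne')
      (by fun_prop)).aestronglyMeasurable measurableSet_Ioi
  · filter_upwards [ae_restrict_mem measurableSet_Ioi] with t (ht : 0 < t)
    have hsplit : exp (-(b * t)) = exp (-(a * t)) * exp (-((b - a) * t)) := by
      rw [← exp_add]; ring_nf
    have hdecay : 0 ≤ 1 - exp (-((b - a) * t)) := sub_nonneg.2 (exp_le_one_iff.2 (by nlinarith))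
    have hlin : 1 - exp (-((b - a) * t)) ≤ (b - a) * t := by
      linarith [add_one_le_exp (-((b - a) * t))]
    rw [hsplit, ← mul_one_sub, norm_of_nonneg (by positivity), neg_mul]
    calc t⁻¹ * (exp (-(a * t)) * (1 - exp (-((b - a) * t))))
        ≤ t⁻¹ * (exp (-(a * t)) * ((b - a) * t)) := by gcongr
      _ = (b - a) * exp (-(a * t)) := by field_simp

theorem integral_Ioi_inv_mul_exp_neg_mul_sub {a b : ℝ} (ha : 0 < a) (hb : 0 < b) :
    ∫ t in Ioi 0, t⁻¹ * (exp (-(a * t)) - exp (-(b * t))) = log (b / a) := by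
  wlog hab : a ≤ b generalizing a b
  · rw [← neg_neg (log (b / a)), ← log_inv, inv_div, ← this hb ha (le_of_not_ge hab),
      ← integral_neg]
    congr 1 with t
    ring
  have hf : Continuous fun t : ℝ ↦ exp (-t) := by fun_prop
  have h := Frullani.integral_Ioi_eq (hf.locallyIntegrable.locallyIntegrableOn _) ha hb
    (by simpa using (hf.tendsto 0).mono_left nhdsWithin_le_nhds) tendsto_exp_neg_atTop_nhds_zero
    (integrableOn_inv_mul_exp_neg_mul_sub ha hab)
  simpa using h

theorem stmt11_general (u v : ℝ) :
    (∫ x : ℝ, (Real.exp (-Real.exp (-(x - v))) -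
        Real.exp (-Real.exp (-(x - u)) - Real.exp (-(x - v)))))
      = Real.log (1 + Real.exp (-(v - u))) := by
  set c := exp (-(v - u))
  let F : ℝ → ℝ := fun t ↦ exp (-(1 * t)) - exp (-((1 + c) * t))
  have hintegrand (x : ℝ) :
      exp (-exp (-(x - v))) - exp (-exp (-(x - u)) - exp (-(x - v))) = F (exp (v - x)) := by
    have hxu : exp (-(x - u)) = c * exp (v - x) := by rw [← exp_add]; ring_nf
    rw [hxu]
    simp only [F, neg_sub]
    ring_nf
  calc _ = ∫ x, F (exp (v - x)) := by simp only [hintegrand]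
    _ = ∫ x, F (exp x) := integral_sub_left_eq_self (F ∘ exp) _ v
    _ = ∫ t in Ioi 0, t⁻¹ * F t := integral_comp_exp F
    _ = log (1 + c) := by
        rw [integral_Ioi_inv_mul_exp_neg_mul_sub one_pos (by positivity), div_one]

theorem stmt11 (u v : ℝ) (huv : u ≤ v) :
    (∫ x : ℝ, (Real.exp (-Real.exp (-(x - v))) -
        Real.exp (-Real.exp (-(x - u)) - Real.exp (-(x - v)))))
      = Real.log (1 + Real.exp (-(v - u))) :=
  stmt11_general u v
end

section
/- For every x ∈ ℝ, (1/(2π)) ∫_ℝ e^{−i t x} log(1 + e^{−|t|}) dt = (1/π) ∑_{n=1}^∞ (−1)^{n−1}/(x² + n²). -/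
/-!
Expand `log (1 + e^{-|t|}) = ∑ₙ (-1)ⁿ e^{-(n+1)|t|} / (n + 1)` for `t ≠ 0` and integrate term by
term. The two-sided exponential `e^{-a|t|}` has Fourier transform `2a / (a² + x²)`, computed by
splitting at `0`, and its `L¹` norm is `2 / a`, so the coefficients `(-1)ⁿ / (n + 1)` give
`L¹` norms `2 / (n + 1)²` whose sum is finite; this justifies the interchange of sum and integral.
-/

open MeasureTheory Set
open scoped Real Complex

open Complex (I)

section TwoSidedExponential

variable {a : ℝ} (x : ℝ)

lemma cexp_mul_exp_neg_mul_abs_of_nonneg {t : ℝ} (ht : 0 ≤ t) :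
    cexp (-I * t * x) * (rexp (-(a * |t|)) : ℂ) = cexp (-(a + I * x) * t) := by
  rw [abs_of_nonneg ht, Complex.ofReal_exp, ← Complex.exp_add]
  push_cast
  ring_nf

lemma cexp_mul_exp_neg_mul_abs_of_nonpos {t : ℝ} (ht : t ≤ 0) :
    cexp (-I * t * x) * (rexp (-(a * |t|)) : ℂ) = cexp ((a - I * x) * t) := by
  rw [abs_of_nonpos ht, Complex.ofReal_exp, ← Complex.exp_add]
  push_cast
  ring_nf

lemma integrable_cexp_mul_exp_neg_mul_abs (ha : 0 < a) :
    Integrable fun t : ℝ => cexp (-I * t * x) * (rexp (-(a * |t|)) : ℂ) := by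
  have hIic : IntegrableOn (fun t : ℝ => cexp (-I * t * x) * (rexp (-(a * |t|)) : ℂ)) (Iic 0) :=
    (integrableOn_exp_mul_complex_Iic (by simpa using ha) 0).congr_fun
      (fun t ht => (cexp_mul_exp_neg_mul_abs_of_nonpos x ht).symm) measurableSet_Iic
  have hIoi : IntegrableOn (fun t : ℝ => cexp (-I * t * x) * (rexp (-(a * |t|)) : ℂ)) (Ioi 0) :=
    (integrableOn_exp_mul_complex_Ioi (by simpa using ha) 0).congr_fun
      (fun t ht => (cexp_mul_exp_neg_mul_abs_of_nonneg x (le_of_lt ht)).symm) measurableSet_Ioi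
  simpa only [Iic_union_Ioi, integrableOn_univ] using hIic.union hIoi

lemma integral_cexp_mul_exp_neg_mul_abs (ha : 0 < a) :
    ∫ t : ℝ, cexp (-I * t * x) * (rexp (-(a * |t|)) : ℂ) = 2 * a / (a ^ 2 + x ^ 2) := by
  have hint := integrable_cexp_mul_exp_neg_mul_abs x ha
  rw [← intervalIntegral.integral_Iic_add_Ioi hint.integrableOn hint.integrableOn,
    setIntegral_congr_fun measurableSet_Iic
      (fun t ht => cexp_mul_exp_neg_mul_abs_of_nonpos x ht),
    setIntegral_congr_fun measurableSet_Ioi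
      (fun t ht => cexp_mul_exp_neg_mul_abs_of_nonneg x (le_of_lt ht)),
    integral_exp_mul_complex_Iic (by simpa using ha),
    integral_exp_mul_complex_Ioi (by simpa using ha)]
  have h₁ : (a : ℂ) - I * x ≠ 0 := fun h => by simpa [ha.ne'] using congrArg Complex.re h
  have h₂ : (a : ℂ) + I * x ≠ 0 := fun h => by simpa [ha.ne'] using congrArg Complex.re h
  have h₃ : (a : ℂ) ^ 2 + x ^ 2 ≠ 0 := by exact_mod_cast (by positivity : a ^ 2 + x ^ 2 ≠ 0)
  simp only [Complex.ofReal_zero, mul_zero, Complex.exp_zero]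
  field_simp
  ring_nf
  rw [Complex.I_sq]
  ring

lemma integral_exp_neg_mul_abs (ha : 0 < a) : ∫ t : ℝ, rexp (-(a * |t|)) = 2 / a := by
  rw [integral_comp_abs (f := fun t => rexp (-(a * t)))]
  simp_rw [← neg_mul]
  rw [integral_exp_mul_Ioi (by linarith) 0]
  field_simp
  simp

lemma norm_cexp_neg_I_mul_mul (t x : ℝ) : ‖cexp (-I * t * x)‖ = 1 := by
  simp [Complex.norm_exp]

end TwoSidedExponential

theorem hasSum_integral_cexp_mul_of_hasSum_exp_neg_mul_abs {c a : ℕ → ℝ} {g : ℝ → ℝ} (x : ℝ)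
    (ha : ∀ n, 0 < a n) (hca : Summable fun n => |c n| / a n)
    (hg : ∀ᵐ t, HasSum (fun n => c n * rexp (-(a n * |t|))) (g t)) :
    HasSum (fun n => ((c n * (2 * a n / (a n ^ 2 + x ^ 2)) : ℝ) : ℂ))
      (∫ t : ℝ, cexp (-I * t * x) * g t) := by
  set F : ℕ → ℝ → ℂ := fun n t => c n * (cexp (-I * t * x) * (rexp (-(a n * |t|)) : ℂ))
  have hF_int (n : ℕ) : Integrable (F n) :=
    (integrable_cexp_mul_exp_neg_mul_abs x (ha n)).const_mul _
  have hF_norm (n : ℕ) : ∫ t, ‖F n t‖ = 2 * (|c n| / a n) := by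
    simp only [F, norm_mul, norm_cexp_neg_I_mul_mul, Complex.norm_real, Real.norm_eq_abs,
      abs_of_pos (Real.exp_pos _), one_mul]
    rw [integral_const_mul, integral_exp_neg_mul_abs (ha n)]
    ring
  have hF_sum : ∀ᵐ t, ∑' n, F n t = cexp (-I * t * x) * g t := by
    filter_upwards [hg] with t ht
    refine ((Complex.hasSum_ofReal.mpr ht).mul_left (cexp (-I * t * x))).tsum_eq ▸ ?_
    congr 1 with n
    simp only [F]
    push_cast
    ring
  have hF_integral (n : ℕ) :
      ∫ t, F n t = ((c n * (2 * a n / (a n ^ 2 + x ^ 2)) : ℝ) : ℂ) := by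
    simp only [F, integral_const_mul, integral_cexp_mul_exp_neg_mul_abs x (ha n)]
    push_cast
    ring
  have hF_hasSum := hasSum_integral_of_summable_integral_norm hF_int
    (by simpa only [hF_norm] using hca.mul_left 2)
  simpa only [hF_integral, integral_congr_ae hF_sum] using hF_hasSum

lemma hasSum_log_one_add_of_abs_lt_one {y : ℝ} (hy : |y| < 1) :
    HasSum (fun n : ℕ => (-1) ^ n * y ^ (n + 1) / (n + 1)) (Real.log (1 + y)) := by
  have := (Real.hasSum_pow_div_log_of_abs_lt_one (x := -y) (by rwa [abs_neg])).neg
  rw [sub_neg_eq_add, neg_neg] at this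
  refine this.congr_fun fun n => ?_
  rw [neg_pow y, pow_succ (-1 : ℝ)]
  ring

lemma hasSum_log_one_add_exp_neg_abs {t : ℝ} (ht : t ≠ 0) :
    HasSum (fun n : ℕ => (-1) ^ n / (n + 1) * rexp (-((n + 1) * |t|)))
      (Real.log (1 + rexp (-|t|))) := by
  have hlt : |rexp (-|t|)| < 1 := by
    rw [abs_of_pos (Real.exp_pos _), Real.exp_lt_one_iff, neg_lt_zero]
    exact abs_pos.mpr ht
  convert hasSum_log_one_add_of_abs_lt_one hlt using 2 with n
  rw [← Real.exp_nat_mul]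
  push_cast
  ring_nf

theorem stmt14 (x : ℝ) :
    (1 / (2 * Real.pi) : ℂ) *
        ∫ t : ℝ, Complex.exp (-Complex.I * t * x) * (Real.log (1 + Real.exp (-|t|)) : ℂ)
      = ((1 / Real.pi) * ∑' n : ℕ, (-1 : ℝ) ^ n / (x ^ 2 + (n + 1) ^ 2) : ℝ) := by
  have hlog : ∀ᵐ t : ℝ, HasSum (fun n : ℕ => (-1) ^ n / (n + 1) * rexp (-((n + 1) * |t|)))
      (Real.log (1 + rexp (-|t|))) :=
    (Measure.ae_ne volume 0).mono fun _ ht => hasSum_log_one_add_exp_neg_abs ht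
  have hsum : Summable fun n : ℕ => |(-1) ^ n / ((n : ℝ) + 1)| / (n + 1) := by
    have := (summable_nat_add_iff 1).mpr (Real.summable_one_div_nat_pow.mpr one_lt_two)
    refine this.congr fun n => ?_
    rw [abs_div, abs_pow, abs_neg, abs_one, one_pow, abs_of_pos (by positivity)]
    push_cast
    field_simp
  have hFourier := hasSum_integral_cexp_mul_of_hasSum_exp_neg_mul_abs x
    (fun n => Nat.cast_add_one_pos n) hsum hlog
  have hterm (n : ℕ) : (-1) ^ n / ((n : ℝ) + 1) * (2 * (n + 1) / ((n + 1) ^ 2 + x ^ 2))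
      = 2 * ((-1) ^ n / (x ^ 2 + (n + 1) ^ 2)) := by
    field_simp
    ring
  rw [← hFourier.tsum_eq, ← Complex.ofReal_tsum, tsum_congr hterm, tsum_mul_left]
  push_cast
  field_simp
end

section
/- Let (X_k)_{k∈ℕ} be independent, identically distributed nonnegative integrable random variables with E X_1 = 1, and let S_n := X_1 + ⋯ + X_n. Then for all real a < b, almost surely lim_{T→∞} sup_{u∈[a,b]} |e^{−T} S_{⌊e^{T+u}⌋} − e^u| = 0. -/
/-! By the strong law of large numbers `S_n / n → 1` almost surely, so the claim is deterministic.
If `x n / n → c`, then `g t := x ⌊t⌋₊ / t → c` as `t → ∞` through the reals, and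
`e^{-T} x ⌊e^{T+u}⌋₊ - c e^u = e^u (g (e^{T+u}) - c)`. Since `e^{T+u} ≥ e^{T+a}` for every
`u ∈ [a, b]` and `e^u ≤ e^b`, the convergence is uniform on `[a, b]`. -/

open Filter Topology MeasureTheory ProbabilityTheory

theorem tendsto_floor_div_of_tendsto_div {x : ℕ → ℝ} {c : ℝ}
    (hx : Tendsto (fun n : ℕ => x n / n) atTop (𝓝 c)) :
    Tendsto (fun t : ℝ => x ⌊t⌋₊ / t) atTop (𝓝 c) := by
  have hprod := (hx.comp tendsto_nat_floor_atTop).mul (tendsto_nat_floor_div_atTop (R := ℝ))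
  rw [mul_one] at hprod
  refine hprod.congr' ?_
  filter_upwards [eventually_ge_atTop 1] with t ht
  exact div_mul_div_cancel₀ (Nat.cast_ne_zero.2 (Nat.floor_pos.2 ht).ne')

theorem tendsto_iSup_Icc_abs_exp_neg_mul_floor_exp_sub {x : ℕ → ℝ} {c : ℝ}
    (hx : Tendsto (fun n : ℕ => x n / n) atTop (𝓝 c)) (a b : ℝ) :
    Tendsto (fun T : ℝ => ⨆ u : Set.Icc a b,
        |Real.exp (-T) * x ⌊Real.exp (T + (u : ℝ))⌋₊ - c * Real.exp (u : ℝ)|)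
      atTop (𝓝 0) := by
  rw [Metric.tendsto_nhds]
  intro ε hε
  set δ := ε / (2 * Real.exp b)
  obtain ⟨M, hM⟩ := eventually_atTop.1 <|
    (tendsto_floor_div_of_tendsto_div hx).eventually (Metric.closedBall_mem_nhds c (show 0 < δ by positivity))
  have hexp : Tendsto (fun T => Real.exp (T + a)) atTop atTop :=
    Real.tendsto_exp_atTop.comp (tendsto_atTop_add_const_right _ a tendsto_id)
  filter_upwards [hexp.eventually_ge_atTop M] with T hT
  have hbound : ∀ u : Set.Icc a b,
      |Real.exp (-T) * x ⌊Real.exp (T + (u : ℝ))⌋₊ - c * Real.exp (u : ℝ)| ≤ ε / 2 := by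
    rintro ⟨u, hau, hub⟩
    have hclose : |x ⌊Real.exp (T + u)⌋₊ / Real.exp (T + u) - c| ≤ δ :=
      hM _ (hT.trans (Real.exp_le_exp.2 (by linarith)))
    have hfactor : Real.exp (-T) * x ⌊Real.exp (T + u)⌋₊ - c * Real.exp u
        = Real.exp u * (x ⌊Real.exp (T + u)⌋₊ / Real.exp (T + u) - c) := by
      rw [Real.exp_add, Real.exp_neg]
      field_simp
    calc |Real.exp (-T) * x ⌊Real.exp (T + u)⌋₊ - c * Real.exp u|
        = Real.exp u * |x ⌊Real.exp (T + u)⌋₊ / Real.exp (T + u) - c| := by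
          rw [hfactor, abs_mul, abs_of_pos (Real.exp_pos u)]
      _ ≤ Real.exp b * δ := by gcongr
      _ = ε / 2 := by simp only [δ]; field_simp
  rw [dist_zero_right, Real.norm_eq_abs, abs_of_nonneg (Real.iSup_nonneg fun _ => abs_nonneg _)]
  exact (Real.iSup_le hbound (by positivity)).trans_lt (by linarith)

theorem stmt18_general
    {Ω : Type*} [MeasurableSpace Ω] {P : Measure Ω}
    (X : ℕ → Ω → ℝ)
    (hindep : iIndepFun X P)
    (hident : ∀ k, IdentDistrib (X k) (X 0) P P)
    (hint : Integrable (X 0) P) (hmean : ∫ ω, X 0 ω ∂P = 1)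
    (a b : ℝ) :
    ∀ᵐ ω ∂P, Tendsto
      (fun T : ℝ => ⨆ u : Set.Icc a b,
        |Real.exp (-T) * (∑ k ∈ Finset.range ⌊Real.exp (T + (u : ℝ))⌋₊, X k ω) -
          Real.exp (u : ℝ)|)
      atTop (𝓝 0) := by
  filter_upwards [strong_law_ae_real X hint (fun i j hij => hindep.indepFun hij) hident]
    with ω hω
  rw [hmean] at hω
  simpa only [one_mul] using tendsto_iSup_Icc_abs_exp_neg_mul_floor_exp_sub hω a b

theorem stmt18
    {Ω : Type*} [MeasurableSpace Ω] {P : Measure Ω} [IsProbabilityMeasure P]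
    (X : ℕ → Ω → ℝ) (hmeas : ∀ k, Measurable (X k))
    (hindep : iIndepFun X P)
    (hident : ∀ k, IdentDistrib (X k) (X 0) P P)
    (hnonneg : ∀ k ω, 0 ≤ X k ω)
    (hint : Integrable (X 0) P) (hmean : ∫ ω, X 0 ω ∂P = 1)
    (a b : ℝ) (hab : a < b) :
    ∀ᵐ ω ∂P, Tendsto
      (fun T : ℝ => ⨆ u : Set.Icc a b,
        |Real.exp (-T) * (∑ k ∈ Finset.range ⌊Real.exp (T + (u : ℝ))⌋₊, X k ω) -
          Real.exp (u : ℝ)|)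
      atTop (𝓝 0) :=
  stmt18_general X hindep hident hint hmean a b
end
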